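/- arXiv:2502.03267 — 2 statements merged into one kernel-verified Lean document; each statement's English description precedes it below -/
import Mathlib

section
/- Let n ≥ 1, let Ω be any subset of ℝⁿ, and let δ ∈ (0, n]. If (f_i)_{i≥1} is a pointwise increasing sequence of functions f_i : Ω → [0, ∞] (f_i(x) ≤ f_{i+1}(x) for all x and i) and f(x) = lim_{i→∞} f_i(x) for every x ∈ Ω, then lim_{i→∞} ∫_Ω f_i dH̃^δ_∞ = ∫_Ω f dH̃^δ_∞. -/
open MeasureTheory Set Metric Filter Topology
open scoped ENNReal

noncomputable section

/-- Euclidean space `ℝⁿ`. -/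
abbrev En (n : ℕ) : Type := EuclideanSpace ℝ (Fin n)

/-- The half-open dyadic cube `2^k (m + [0,1)ⁿ)`, `k : ℤ`, `m : ℤⁿ`. -/
def dyadicCube (n : ℕ) (k : ℤ) (m : Fin n → ℤ) : Set (En n) :=
  {x | ∀ i, (m i : ℝ) * 2 ^ k ≤ x i ∧ x i < ((m i : ℝ) + 1) * 2 ^ k}

/-- The `δ`-dimensional dyadic Hausdorff content `H̃^δ_∞`: the infimum of `Σ ℓ(Q_i)^δ`
over all countable collections of dyadic cubes whose union's interior covers `E`. -/
def dyadicContent (n : ℕ) (δ : ℝ) (E : Set (En n)) : ℝ≥0∞ :=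
  ⨅ (c : ℕ → ℤ × (Fin n → ℤ))
    (_ : E ⊆ interior (⋃ i, dyadicCube n (c i).1 (c i).2)),
    ∑' i, ENNReal.ofReal (((2 : ℝ) ^ (c i).1) ^ δ)

/-- The Choquet integral `∫_Ω f dH̃^δ_∞ := ∫_0^∞ H̃^δ_∞({x ∈ Ω : f x > t}) dt`
of a `[0,∞]`-valued function over `Ω ⊆ ℝⁿ`. -/
def choquetIntegral (n : ℕ) (δ : ℝ) (Ω : Set (En n)) (f : En n → ℝ≥0∞) : ℝ≥0∞ :=
  ∫⁻ t in Ioi (0 : ℝ), dyadicContent n δ {x | x ∈ Ω ∧ ENNReal.ofReal t < f x}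

/-- The Choquet integral `∫_Ω |f| dH̃^δ_∞` of a real-valued function. -/
def choquetIntegralAbs (n : ℕ) (δ : ℝ) (Ω : Set (En n)) (f : En n → ℝ) : ℝ≥0∞ :=
  choquetIntegral n δ Ω (fun x => ENNReal.ofReal |f x|)

/-- The Choquet integral `∫_Ω |f| dH̃^δ_∞` of an extended-real-valued function. -/
def choquetIntegralEAbs (n : ℕ) (δ : ℝ) (Ω : Set (En n)) (f : En n → EReal) : ℝ≥0∞ :=
  choquetIntegral n δ Ω (fun x => (f x).abs)

/-- The ball average `f^δ_{B(x,r)} := (1/H̃^δ_∞(B(x,r))) ∫_{B(x,r)} f dH̃^δ_∞`. -/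
def ballAvg (n : ℕ) (δ : ℝ) (f : En n → ℝ≥0∞) (x : En n) (r : ℝ) : ℝ≥0∞ :=
  choquetIntegral n δ (ball x r) f / dyadicContent n δ (ball x r)

/-- The Hausdorff-content centred maximal function `M^δ f(x)`. -/
def maximal (n : ℕ) (δ : ℝ) (f : En n → ℝ≥0∞) (x : En n) : ℝ≥0∞ :=
  ⨆ (r : ℝ) (_ : 0 < r), ballAvg n δ f x r

/-- `f^δ_*(x) := limsup_{r→0⁺} (1/H̃^δ_∞(B(x,r))) ∫_{B(x,r)} |f(y) − f(x)| dH̃^δ_∞(y)`. -/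
def lebDev (n : ℕ) (δ : ℝ) (f : En n → ℝ) (x : En n) : ℝ≥0∞ :=
  limsup (fun r : ℝ => choquetIntegralAbs n δ (ball x r) (fun y => f y - f x) /
    dyadicContent n δ (ball x r)) (𝓝[>] (0 : ℝ))

/-- `limsup_{r→0⁺} f^δ_{B(x,r)}` of the ball averages. -/
def limsupAvg (n : ℕ) (δ : ℝ) (f : En n → ℝ≥0∞) (x : En n) : ℝ≥0∞ :=
  limsup (fun r : ℝ => ballAvg n δ f x r) (𝓝[>] (0 : ℝ))

/-!
The Choquet integral is the Lebesgue integral of `t ↦ H̃^δ_∞({f > t})`, and the superlevel sets of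
the `f i` increase to those of `g`, so by monotone convergence for the Lebesgue integral it suffices
that `H̃^δ_∞` is continuous along increasing sequences `E m`. Two dyadic cubes that meet are nested.
Hence, given a cover `s` of `E m` and a near-optimal cover `s'` of `E (m + 1)`, the maximal cubes of
`s ∪ s'` cover `E (m + 1)` and contain every cube of `s`, while the other cubes of `s ∪ s'`, with
those of `s ∩ s'`, still cover `E m`; so the maximal cubes cost at most
`Σ s + H̃(E (m + 1)) - H̃(E m)` plus a small error. Iterating gives covers `D m` of `E m`, each cube
of `D m` lying in a cube of `D (m + 1)`, of cost at most `H̃(E m) + ε`. As `δ > 0`, cubes of bounded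
weight have bounded scale, so the maximal cubes of `⋃ D m` exist, cover `⋃ E m` and eventually
belong to every `D m`, whence `H̃(⋃ E m) ≤ sup H̃(E m) + ε`.
-/

namespace DyadicCube

variable {n : ℕ} {δ : ℝ}

abbrev Index (n : ℕ) : Type := ℤ × (Fin n → ℤ)

def cube (q : Index n) : Set (En n) := dyadicCube n q.1 q.2

lemma mem_cube_iff_floor {q : Index n} {x : En n} :
    x ∈ cube q ↔ ∀ i, ⌊x i / 2 ^ q.1⌋ = q.2 i := by
  have h2 : (0 : ℝ) < 2 ^ q.1 := zpow_pos two_pos _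
  refine forall_congr' fun i => ?_
  rw [Int.floor_eq_iff, le_div_iff₀ h2, div_lt_iff₀ h2]

lemma floor_div_two_zpow_of_le {k k' : ℤ} (hk : k ≤ k') (a : ℝ) :
    ⌊a / 2 ^ k'⌋ = ⌊a / 2 ^ k⌋ / 2 ^ (k' - k).toNat := by
  have h : (2 : ℝ) ^ k' = 2 ^ k * ((2 ^ (k' - k).toNat : ℕ) : ℝ) := by
    rw [Nat.cast_pow, Nat.cast_ofNat, ← zpow_natCast, ← zpow_add₀ two_ne_zero,
      Int.toNat_of_nonneg (sub_nonneg.mpr hk), add_sub_cancel]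
  rw [h, ← div_div, Int.floor_div_natCast, Nat.cast_pow, Nat.cast_ofNat]

lemma cube_subset_of_scale_le {q r : Index n} (hqr : q.1 ≤ r.1)
    (hne : (cube q ∩ cube r).Nonempty) : cube q ⊆ cube r := by
  obtain ⟨x, hxq, hxr⟩ := hne
  intro y hy
  rw [mem_cube_iff_floor] at hxq hxr hy ⊢
  intro i
  rw [floor_div_two_zpow_of_le hqr, hy, ← hxq, ← floor_div_two_zpow_of_le hqr, hxr]

lemma cube_subset_or_subset {q r : Index n} (hne : (cube q ∩ cube r).Nonempty) :
    cube q ⊆ cube r ∨ cube r ⊆ cube q := by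
  rcases le_total q.1 r.1 with h | h
  · exact .inl (cube_subset_of_scale_le h hne)
  · exact .inr (cube_subset_of_scale_le h (inter_comm (cube q) _ ▸ hne))

def corner (q : Index n) : En n := WithLp.toLp 2 fun i => (q.2 i : ℝ) * 2 ^ q.1

lemma corner_mem_cube (q : Index n) : corner q ∈ cube q := by
  rw [mem_cube_iff_floor]
  intro i
  simp [corner, zpow_ne_zero]

lemma scale_le_of_cube_subset (hn : n ≠ 0) {q r : Index n} (h : cube q ⊆ cube r) :
    q.1 ≤ r.1 := by
  by_contra! hlt
  let i : Fin n := ⟨0, Nat.pos_of_ne_zero hn⟩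
  have hpow : (2 : ℝ) ^ r.1 * 2 ≤ 2 ^ q.1 := by
    rw [← zpow_add_one₀ two_ne_zero]
    exact zpow_le_zpow_right₀ one_le_two (Int.add_one_le_of_lt hlt)
  -- `corner q` and `y` lie in `cube q` but are `2^q.1 - 2^r.1 ≥ 2^r.1` apart in every coordinate
  let y : En n := WithLp.toLp 2 fun i => ((q.2 i : ℝ) + 1) * 2 ^ q.1 - 2 ^ r.1
  have hy : y ∈ cube q := fun i => by
    have : (0 : ℝ) < 2 ^ r.1 := zpow_pos two_pos _
    constructor <;> simp only [y] <;> linarith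
  obtain ⟨hx₁, -⟩ := h (corner_mem_cube q) i
  obtain ⟨-, hy₂⟩ := h hy i
  simp only [corner, y] at hx₁ hy₂
  linarith

lemma eq_of_cube_subset_of_scale_le (hn : n ≠ 0) {q r : Index n} (h : cube q ⊆ cube r)
    (hrq : r.1 ≤ q.1) : q = r := by
  have hk : q.1 = r.1 := le_antisymm (scale_le_of_cube_subset hn h) hrq
  have hx := mem_cube_iff_floor.mp (h (corner_mem_cube q))
  refine Prod.ext hk (funext fun i => ?_)
  rw [← hx i, ← hk]
  simp [corner, zpow_ne_zero]

def weight (δ : ℝ) (q : Index n) : ℝ≥0∞ := ENNReal.ofReal (((2 : ℝ) ^ q.1) ^ δ)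

lemma weight_eq_ofReal_two_rpow (δ : ℝ) (q : Index n) :
    weight δ q = ENNReal.ofReal (2 ^ ((q.1 : ℝ) * δ)) := by
  rw [weight, ← Real.rpow_intCast, ← Real.rpow_mul zero_le_two]

lemma exists_weight_lt (hδ : 0 < δ) {ε : ℝ≥0∞} (hε : 0 < ε) : ∃ q : Index n, weight δ q < ε := by
  have : Tendsto (fun k : ℤ => weight δ ((k, 0) : Index n)) atBot (𝓝 0) := by
    simp_rw [weight_eq_ofReal_two_rpow, ← ENNReal.ofReal_zero]
    refine ENNReal.tendsto_ofReal ((tendsto_rpow_atBot_of_base_gt_one 2 one_lt_two).comp ?_)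
    exact (tendsto_intCast_atBot_iff.2 tendsto_id).atBot_mul_const hδ
  obtain ⟨k, hk⟩ := (this.eventually (gt_mem_nhds hε)).exists
  exact ⟨_, hk⟩

lemma exists_scale_bound (hδ : 0 < δ) {B : ℝ≥0∞} (hB : B ≠ ∞) :
    ∃ K : ℤ, ∀ q : Index n, weight δ q ≤ B → q.1 ≤ K := by
  have : Tendsto (fun k : ℤ => (2 : ℝ) ^ ((k : ℝ) * δ)) atTop atTop :=
    (tendsto_rpow_atTop_of_base_gt_one 2 one_lt_two).comp <|
      (tendsto_intCast_atTop_atTop (R := ℝ)).atTop_mul_const hδ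
  obtain ⟨K, hK⟩ := eventually_atTop.mp (this.eventually_gt_atTop B.toReal)
  refine ⟨K, fun q hq => ?_⟩
  by_contra! hlt
  rw [weight_eq_ofReal_two_rpow, ENNReal.ofReal_le_iff_le_toReal hB] at hq
  exact (hK q.1 hlt.le).not_ge hq

def weightMeasure (n : ℕ) (δ : ℝ) : Measure (Index n) :=
  Measure.sum fun q => weight δ q • Measure.dirac q

lemma weightMeasure_apply (s : Set (Index n)) :
    weightMeasure n δ s = ∑' q : s, weight δ (q : Index n) := by
  rw [weightMeasure, Measure.sum_apply_of_countable, tsum_subtype]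
  congr 1 with q
  by_cases hq : q ∈ s <;> simp [Measure.dirac_apply, hq]

lemma weightMeasure_singleton (q : Index n) : weightMeasure n δ {q} = weight δ q := by
  rw [weightMeasure_apply, tsum_singleton]

lemma weight_le_weightMeasure {s : Set (Index n)} {q : Index n} (hq : q ∈ s) :
    weight δ q ≤ weightMeasure n δ s :=
  weightMeasure_singleton (δ := δ) q ▸ measure_mono (singleton_subset_iff.mpr hq)

def maximalCubes (u : Set (Index n)) : Set (Index n) :=
  {r ∈ u | ∀ r' ∈ u, cube r ⊆ cube r' → r' = r}

lemma exists_mem_maximalCubes (hn : n ≠ 0) (hδ : 0 < δ) {u : Set (Index n)} {B : ℝ≥0∞}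
    (hB : B ≠ ∞) (hu : ∀ q ∈ u, weight δ q ≤ B) {q : Index n} (hq : q ∈ u) :
    ∃ r ∈ maximalCubes u, cube q ⊆ cube r := by
  obtain ⟨K, hK⟩ := exists_scale_bound (n := n) hδ hB
  -- among the cubes of `u` containing `cube q`, one of largest scale is maximal
  obtain ⟨_, ⟨r, hru, hqr, rfl⟩, hmax⟩ :=
    Int.exists_greatest_of_bdd (P := fun k => ∃ r ∈ u, cube q ⊆ cube r ∧ r.1 = k)
      ⟨K, fun _ ⟨r, hru, _, hr⟩ => hr ▸ hK r (hu r hru)⟩ ⟨q.1, q, hq, subset_rfl, rfl⟩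
  refine ⟨r, ⟨hru, fun r' hr'u hrr' => ?_⟩, hqr⟩
  exact (eq_of_cube_subset_of_scale_le hn hrr' (hmax _ ⟨r', hr'u, hqr.trans hrr', rfl⟩)).symm

lemma biUnion_maximalCubes (hn : n ≠ 0) (hδ : 0 < δ) {u : Set (Index n)} {B : ℝ≥0∞}
    (hB : B ≠ ∞) (hu : ∀ q ∈ u, weight δ q ≤ B) :
    ⋃ q ∈ maximalCubes u, cube q = ⋃ q ∈ u, cube q := by
  refine (biUnion_subset_biUnion_left fun _ hr => hr.1).antisymm (iUnion₂_subset fun q hq => ?_)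
  obtain ⟨r, hr, hqr⟩ := exists_mem_maximalCubes hn hδ hB hu hq
  exact hqr.trans (subset_biUnion_of_mem hr)

lemma biUnion_inter_biUnion_subset (s t : Set (Index n)) :
    (⋃ q ∈ s, cube q) ∩ (⋃ q ∈ t, cube q) ⊆
      ⋃ q ∈ ((s ∪ t) \ maximalCubes (s ∪ t)) ∪ (s ∩ t), cube q := by
  rintro x ⟨hxs, hxt⟩
  obtain ⟨a, has, hxa⟩ := mem_iUnion₂.mp hxs
  obtain ⟨b, hbt, hxb⟩ := mem_iUnion₂.mp hxt
  by_cases hab : a = b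
  · subst hab
    exact mem_biUnion (.inr ⟨has, hbt⟩) hxa
  rcases cube_subset_or_subset ⟨x, hxa, hxb⟩ with h | h
  · exact mem_biUnion (.inl ⟨.inl has, fun hmax => hab (hmax.2 b (.inr hbt) h).symm⟩) hxa
  · exact mem_biUnion (.inl ⟨.inr hbt, fun hmax => hab (hmax.2 a (.inl has) h)⟩) hxb

end DyadicCube

theorem exists_seq_of_forall_exists_succ {α : Type*} {P : ℕ → α → Prop} {R : α → α → Prop}
    (h₀ : ∃ a, P 0 a) (h : ∀ m a, P m a → ∃ b, P (m + 1) b ∧ R a b) :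
    ∃ f : ℕ → α, ∀ m, P m (f m) ∧ R (f m) (f (m + 1)) := by
  choose! next hnext using h
  obtain ⟨a₀, ha₀⟩ := h₀
  let f : ℕ → α := fun m => Nat.rec a₀ next m
  have hf : ∀ m, P m (f m) := fun m => Nat.rec ha₀ (fun m ih => (hnext m _ ih).1) m
  exact ⟨f, fun m => ⟨hf m, (hnext m _ (hf m)).2⟩⟩

section

open DyadicCube

variable {n : ℕ} {δ : ℝ}

lemma dyadicContent_mono {E F : Set (En n)} (h : E ⊆ F) :
    dyadicContent n δ E ≤ dyadicContent n δ F :=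
  iInf_mono fun _ => iInf_mono' fun hc => ⟨h.trans hc, le_rfl⟩

lemma dyadicContent_le_tsum (hδ : 0 < δ) {ι : Type*} [Countable ι] (c : ι → Index n)
    {E : Set (En n)} (hE : E ⊆ interior (⋃ i, cube (c i))) :
    dyadicContent n δ E ≤ ∑' i, weight δ (c i) := by
  refine ENNReal.le_of_forall_pos_le_add fun ε hε _ => ?_
  obtain ⟨ε', hε'_pos, hε'⟩ := ENNReal.exists_pos_sum_of_countable' (ENNReal.coe_ne_zero.2 hε.ne') ℕ
  choose pad hpad using fun j => exists_weight_lt (n := n) hδ (hε'_pos j)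
  -- padding by ever smaller cubes makes the family countably infinite, hence indexable by `ℕ`
  obtain ⟨e⟩ := nonempty_equiv_of_countable (α := ℕ) (β := ι ⊕ ℕ)
  let c' : ℕ → Index n := Sum.elim c pad ∘ e
  have hE' : E ⊆ interior (⋃ j, cube (c' j)) := by
    refine hE.trans (interior_mono (iUnion_subset fun i => ?_))
    simpa [c'] using subset_iUnion (fun j => cube (c' j)) (e.symm (.inl i))
  calc dyadicContent n δ E ≤ ∑' j, weight δ (c' j) := iInf₂_le c' hE'
    _ = ∑' i, weight δ (Sum.elim c pad i) := e.tsum_eq (weight δ ∘ Sum.elim c pad)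
    _ = ∑' i, weight δ (c i) + ∑' j, weight δ (pad j) :=
      ENNReal.summable.tsum_sum ENNReal.summable
    _ ≤ ∑' i, weight δ (c i) + ε :=
      add_le_add_right ((ENNReal.tsum_le_tsum fun j => (hpad j).le).trans hε'.le) _

lemma dyadicContent_le_weightMeasure (hδ : 0 < δ) {s : Set (Index n)} {E : Set (En n)}
    (hE : E ⊆ interior (⋃ q ∈ s, cube q)) : dyadicContent n δ E ≤ weightMeasure n δ s := by
  rw [weightMeasure_apply]
  exact dyadicContent_le_tsum hδ (fun q : s => (q : Index n)) (by rwa [biUnion_eq_iUnion] at hE)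

lemma exists_cover_weightMeasure_le {E : Set (En n)} (hE : dyadicContent n δ E ≠ ∞)
    {ε : ℝ≥0∞} (hε : 0 < ε) :
    ∃ s : Set (Index n), E ⊆ interior (⋃ q ∈ s, cube q) ∧
      weightMeasure n δ s ≤ dyadicContent n δ E + ε := by
  obtain ⟨c, hc⟩ := iInf_lt_iff.mp (ENNReal.lt_add_right hE hε.ne')
  obtain ⟨hcE, hsum⟩ := iInf_lt_iff.mp hc
  refine ⟨range c, by rwa [biUnion_range], ?_⟩
  calc weightMeasure n δ (range c) = weightMeasure n δ (⋃ i, {c i}) := by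
        rw [iUnion_singleton_eq_range]
    _ ≤ ∑' i, weightMeasure n δ {c i} := measure_iUnion_le _
    _ = ∑' i, weight δ (c i) := by simp_rw [weightMeasure_singleton]
    _ ≤ dyadicContent n δ E + ε := hsum.le

lemma weightMeasure_maximalCubes_add_dyadicContent_le (hδ : 0 < δ) {s t : Set (Index n)}
    {A : Set (En n)} (hs : A ⊆ interior (⋃ q ∈ s, cube q)) (ht : A ⊆ interior (⋃ q ∈ t, cube q)) :
    weightMeasure n δ (maximalCubes (s ∪ t)) + dyadicContent n δ A ≤
      weightMeasure n δ s + weightMeasure n δ t := by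
  set μ := weightMeasure n δ
  set M := maximalCubes (s ∪ t)
  have hA : A ⊆ interior (⋃ q ∈ ((s ∪ t) \ M) ∪ (s ∩ t), cube q) := by
    refine (subset_inter hs ht).trans ?_
    rw [← interior_inter]
    exact interior_mono (biUnion_inter_biUnion_subset s t)
  calc μ M + dyadicContent n δ A ≤ μ M + (μ ((s ∪ t) \ M) + μ (s ∩ t)) :=
        add_le_add_right ((dyadicContent_le_weightMeasure hδ hA).trans (measure_union_le _ _)) _
    _ = μ (s ∪ t) + μ (s ∩ t) := by
        rw [← add_assoc, measure_add_sdiff MeasurableSet.of_discrete.nullMeasurableSet,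
          union_eq_right.mpr fun _ h => h.1]
    _ = μ s + μ t := measure_union_add_inter _ (.of_discrete)

lemma exists_refining_cover (hn : n ≠ 0) (hδ : 0 < δ) {A B : Set (En n)} (hAB : A ⊆ B)
    (hB : dyadicContent n δ B ≠ ∞) {s : Set (Index n)} (hsA : A ⊆ interior (⋃ q ∈ s, cube q))
    (hs : weightMeasure n δ s ≠ ∞) {ε : ℝ≥0∞} (hε : 0 < ε) (hε_top : ε ≠ ∞) :
    ∃ t : Set (Index n), B ⊆ interior (⋃ q ∈ t, cube q) ∧
      weightMeasure n δ t + dyadicContent n δ A ≤ weightMeasure n δ s + dyadicContent n δ B + ε ∧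
      ∀ q ∈ s, ∃ r ∈ t, cube q ⊆ cube r := by
  obtain ⟨s', hs'B, hs'⟩ := exists_cover_weightMeasure_le hB hε
  have hfin : weightMeasure n δ (s ∪ s') ≠ ∞ :=
    ne_top_of_le_ne_top (ENNReal.add_ne_top.2 ⟨hs, ne_top_of_le_ne_top
      (ENNReal.add_ne_top.2 ⟨hB, hε_top⟩) hs'⟩) (measure_union_le s s')
  have hweight := fun q (hq : q ∈ s ∪ s') => weight_le_weightMeasure (δ := δ) hq
  refine ⟨maximalCubes (s ∪ s'), ?_, ?_, fun q hq => ?_⟩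
  · rw [biUnion_maximalCubes hn hδ hfin hweight]
    exact hs'B.trans (interior_mono (biUnion_subset_biUnion_left subset_union_right))
  · calc _ ≤ weightMeasure n δ s + weightMeasure n δ s' :=
          weightMeasure_maximalCubes_add_dyadicContent_le hδ hsA (hAB.trans hs'B)
      _ ≤ _ := (add_le_add_right hs' _).trans_eq (add_assoc _ _ _).symm
  · exact exists_mem_maximalCubes hn hδ hfin hweight (.inl hq)

lemma exists_refining_covers (hn : n ≠ 0) (hδ : 0 < δ) {E : ℕ → Set (En n)} (hE : Monotone E)
    (hE_fin : ∀ m, dyadicContent n δ (E m) ≠ ∞) {ε : ℝ≥0∞} (hε : 0 < ε) :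
    ∃ D : ℕ → Set (Index n), ∀ m, E m ⊆ interior (⋃ q ∈ D m, cube q) ∧
      weightMeasure n δ (D m) ≤ dyadicContent n δ (E m) + ε ∧
      ∀ q ∈ D m, ∃ r ∈ D (m + 1), cube q ⊆ cube r := by
  obtain ⟨ε', hε'_pos, hε'⟩ := ENNReal.exists_pos_sum_of_countable' hε.ne' ℕ
  let e : ℕ → ℝ≥0∞ := fun m => ∑ j ∈ Finset.range (m + 1), ε' j
  have he : ∀ m, e m < ε := fun m => (ENNReal.sum_le_tsum _).trans_lt hε'
  have hε'_top : ∀ m, ε' m ≠ ∞ := fun m => ne_top_of_le_ne_top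
    (ne_top_of_lt (he m)) (Finset.single_le_sum (fun j _ => zero_le) (Finset.self_mem_range_succ m))
  obtain ⟨D, hD⟩ := exists_seq_of_forall_exists_succ
    (P := fun m s => E m ⊆ interior (⋃ q ∈ s, cube q) ∧
      weightMeasure n δ s ≤ dyadicContent n δ (E m) + e m)
    (R := fun s t => ∀ q ∈ s, ∃ r ∈ t, cube q ⊆ cube r)
    (by simpa [e] using exists_cover_weightMeasure_le (hE_fin 0) (hε'_pos 0))
    (fun m s ⟨hsE, hs⟩ => by
      obtain ⟨t, htE, ht, hst⟩ := exists_refining_cover hn hδ (hE m.le_succ) (hE_fin (m + 1)) hsE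
        (ne_top_of_le_ne_top (ENNReal.add_ne_top.2 ⟨hE_fin m, ne_top_of_lt (he m)⟩) hs)
        (hε'_pos (m + 1)) (hε'_top (m + 1))
      refine ⟨t, ⟨htE, ENNReal.le_of_add_le_add_right (hE_fin m) (ht.trans ?_)⟩, hst⟩
      calc _ ≤ dyadicContent n δ (E m) + e m + dyadicContent n δ (E (m + 1)) + ε' (m + 1) := by
            gcongr
        _ = _ := by simp only [e, Finset.sum_range_succ _ (m + 1)]; ring)
  exact ⟨D, fun m => ⟨(hD m).1.1, (hD m).1.2.trans (add_le_add_right (he m).le _), (hD m).2⟩⟩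

lemma dyadicContent_iUnion_le_of_refining (hn : n ≠ 0) (hδ : 0 < δ) {E : ℕ → Set (En n)}
    {D : ℕ → Set (Index n)} (hDE : ∀ m, E m ⊆ interior (⋃ q ∈ D m, cube q))
    (hD : ∀ m, ∀ q ∈ D m, ∃ r ∈ D (m + 1), cube q ⊆ cube r) {B : ℝ≥0∞} (hB : B ≠ ∞)
    (hDB : ∀ m, weightMeasure n δ (D m) ≤ B) :
    dyadicContent n δ (⋃ m, E m) ≤ B := by
  set U := ⋃ m, D m
  have hU : ∀ q ∈ U, weight δ q ≤ B := fun q hq => by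
    obtain ⟨m, hqm⟩ := mem_iUnion.mp hq
    exact (weight_le_weightMeasure hqm).trans (hDB m)
  set M := maximalCubes U
  have hM_mono : Monotone fun m => M ∩ D m := monotone_nat_of_le_succ fun m r ⟨hrM, hrm⟩ => by
    obtain ⟨r', hr', hrr'⟩ := hD m r hrm
    exact ⟨hrM, hrM.2 r' (mem_iUnion_of_mem _ hr') hrr' ▸ hr'⟩
  have hM : M = ⋃ m, M ∩ D m := by rw [← inter_iUnion, inter_eq_left.mpr fun _ h => h.1]
  calc dyadicContent n δ (⋃ m, E m) ≤ weightMeasure n δ M := by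
        refine dyadicContent_le_weightMeasure hδ (iUnion_subset fun m => (hDE m).trans ?_)
        rw [biUnion_maximalCubes hn hδ hB hU]
        exact interior_mono (biUnion_subset_biUnion_left (subset_iUnion D m))
    _ = ⨆ m, weightMeasure n δ (M ∩ D m) := by rw [← hM_mono.measure_iUnion, ← hM]
    _ ≤ B := iSup_le fun m => (measure_mono inter_subset_right).trans (hDB m)

theorem dyadicContent_iUnion_of_monotone (hn : n ≠ 0) (hδ : 0 < δ) {E : ℕ → Set (En n)}
    (hE : Monotone E) : dyadicContent n δ (⋃ m, E m) = ⨆ m, dyadicContent n δ (E m) := by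
  refine le_antisymm ?_ (iSup_le fun m => dyadicContent_mono (subset_iUnion E m))
  set S := ⨆ m, dyadicContent n δ (E m)
  rcases eq_or_ne S ∞ with hS | hS
  · exact hS ▸ le_top
  have hE_le : ∀ m, dyadicContent n δ (E m) ≤ S := le_iSup (fun m => dyadicContent n δ (E m))
  have hE_fin : ∀ m, dyadicContent n δ (E m) ≠ ∞ := fun m => ne_top_of_le_ne_top hS (hE_le m)
  refine ENNReal.le_of_forall_pos_le_add fun ε hε _ => ?_
  obtain ⟨D, hD⟩ := exists_refining_covers hn hδ hE hE_fin (ENNReal.coe_pos.2 hε)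
  exact dyadicContent_iUnion_le_of_refining hn hδ (fun m => (hD m).1) (fun m => (hD m).2.2)
    (ENNReal.add_ne_top.2 ⟨hS, ENNReal.coe_ne_top⟩)
    (fun m => (hD m).2.1.trans (add_le_add_left (hE_le m) _))

lemma choquetIntegral_congr {Ω : Set (En n)} {f g : En n → ℝ≥0∞} (h : EqOn f g Ω) :
    choquetIntegral n δ Ω f = choquetIntegral n δ Ω g := by
  unfold choquetIntegral
  congr! 3 with t
  ext x
  exact and_congr_right fun hx => by rw [h hx]

lemma choquetIntegral_mono {Ω : Set (En n)} {f g : En n → ℝ≥0∞} (h : ∀ x ∈ Ω, f x ≤ g x) :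
    choquetIntegral n δ Ω f ≤ choquetIntegral n δ Ω g :=
  lintegral_mono fun _ => dyadicContent_mono fun x ⟨hx, hlt⟩ => ⟨hx, hlt.trans_le (h x hx)⟩

theorem choquetIntegral_iSup (hn : n ≠ 0) (hδ : 0 < δ) {Ω : Set (En n)} {f : ℕ → En n → ℝ≥0∞}
    (hf : ∀ x ∈ Ω, Monotone fun i => f i x) :
    choquetIntegral n δ Ω (fun x => ⨆ i, f i x) = ⨆ i, choquetIntegral n δ Ω (f i) := by
  let level : ℕ → ℝ → Set (En n) := fun i t => {x | x ∈ Ω ∧ ENNReal.ofReal t < f i x}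
  have hlevel : ∀ t, {x | x ∈ Ω ∧ ENNReal.ofReal t < ⨆ i, f i x} = ⋃ i, level i t := fun t => by
    ext x
    simp [level, lt_iSup_iff]
  have hmono : ∀ t, Monotone fun i => level i t :=
    fun t i j hij x ⟨hx, hlt⟩ => ⟨hx, hlt.trans_le (hf x hx hij)⟩
  have hmeas : ∀ i, Measurable fun t => dyadicContent n δ (level i t) := fun i =>
    Antitone.measurable fun t s hts => dyadicContent_mono fun x ⟨hx, hlt⟩ =>
      ⟨hx, (ENNReal.ofReal_le_ofReal hts).trans_lt hlt⟩
  unfold choquetIntegral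
  simp_rw [hlevel, dyadicContent_iUnion_of_monotone hn hδ (hmono _)]
  exact lintegral_iSup hmeas fun i j hij t => dyadicContent_mono (hmono t hij)

end

theorem choquet_monotone_convergence_general (n : ℕ) (hn : 1 ≤ n) (Ω : Set (En n))
    (δ : ℝ) (hδ0 : 0 < δ)
    (f : ℕ → En n → ℝ≥0∞) (g : En n → ℝ≥0∞)
    (hmono : ∀ i, ∀ x ∈ Ω, f i x ≤ f (i + 1) x)
    (hlim : ∀ x ∈ Ω, Tendsto (fun i => f i x) atTop (𝓝 (g x))) :
    Tendsto (fun i => choquetIntegral n δ Ω (f i)) atTop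
      (𝓝 (choquetIntegral n δ Ω g)) := by
  have hf : ∀ x ∈ Ω, Monotone fun i => f i x :=
    fun x hx => monotone_nat_of_le_succ fun i => hmono i x hx
  have hg : EqOn g (fun x => ⨆ i, f i x) Ω :=
    fun x hx => tendsto_nhds_unique (hlim x hx) (tendsto_atTop_iSup (hf x hx))
  rw [choquetIntegral_congr hg, choquetIntegral_iSup (Nat.one_le_iff_ne_zero.mp hn) hδ0 hf]
  exact tendsto_atTop_iSup fun i j hij => choquetIntegral_mono fun x hx => hf x hx hij

/-- monotone convergence for the Choquet integral with respect to
the dyadic Hausdorff content. -/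
theorem choquet_monotone_convergence (n : ℕ) (hn : 1 ≤ n) (Ω : Set (En n))
    (δ : ℝ) (hδ0 : 0 < δ) (hδn : δ ≤ n)
    (f : ℕ → En n → ℝ≥0∞) (g : En n → ℝ≥0∞)
    (hmono : ∀ i, ∀ x ∈ Ω, f i x ≤ f (i + 1) x)
    (hlim : ∀ x ∈ Ω, Tendsto (fun i => f i x) atTop (𝓝 (g x))) :
    Tendsto (fun i => choquetIntegral n δ Ω (f i)) atTop
      (𝓝 (choquetIntegral n δ Ω g)) :=
  choquet_monotone_convergence_general n hn Ω δ hδ0 f g hmono hlim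
end
end

section
/- Let n ≥ 1, let Ω be any subset of ℝⁿ, and let δ ∈ (0, n]. If (f_i)_{i≥1} is any sequence of functions f_i : Ω → [0, ∞], then Fatou's lemma holds for the Choquet integral: ∫_Ω (liminf_{i→∞} f_i) dH̃^δ_∞ ≤ liminf_{i→∞} ∫_Ω f_i dH̃^δ_∞. -/
open MeasureTheory Set Metric Filter Topology
open scoped ENNReal

noncomputable section

/-! The Choquet integral is the Lebesgue integral of the distribution function
`t ↦ H̃^δ_∞({f > t})`, so by Fatou's lemma for `lintegral` it suffices that
`H̃^δ_∞({liminf fᵢ > t}) ≤ liminf H̃^δ_∞({fᵢ > t})`. Since `{liminf fᵢ > t}` lies in the increasing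
union of the sets `{fᵢ > t for all i ≥ N}`, this follows from continuity of the content along
increasing unions.

For an increasing union of open sets this is a compactness argument. Near-optimal covers of the
finite unions of dyadic cubes inside the union are passed to a limit along an ultrafilter: the limit
family consists of the cubes `Q` that, in the limit, weigh at most as much as the cubes of the
covers inside `Q`. It covers the union, because a cube that is not contained in a single cube of a
cover is, by comparing Lebesgue measures, at most as heavy as the cubes of that cover inside it.
Its maximal cubes are disjoint, so their total weight is bounded by the cost of a single cover.
General increasing unions reduce to open ones by outer regularity and strong subadditivity
`H(A ∪ B) + H(A ∩ B) ≤ H(A) + H(B)`, which holds because two dyadic cubes are nested or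
disjoint. -/

lemma ENNReal.tsum_range_le_tsum {α : Type*} (c : ℕ → α) (f : α → ℝ≥0∞) :
    ∑' q : Set.range c, f q ≤ ∑' i, f (c i) := by
  simpa only [Set.apply_rangeSplitting] using
    ENNReal.tsum_comp_le_tsum_of_injective (Set.rangeSplitting_injective c) (fun i => f (c i))

lemma ENNReal.tsum_subtype_add_tsum_subtype_le {α : Type*} {M N R S : Set α} (f : α → ℝ≥0∞)
    (hM : M ⊆ R ∪ S) (hN : N ⊆ R ∪ S) (hMN : M ∩ N ⊆ R ∩ S) :
    ∑' x : M, f x + ∑' x : N, f x ≤ ∑' x : R, f x + ∑' x : S, f x := by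
  simp only [tsum_subtype, ← ENNReal.tsum_add]
  refine ENNReal.tsum_le_tsum fun x => ?_
  have h1 := @hM x
  have h2 := @hN x
  have h3 := @hMN x
  by_cases hm : x ∈ M <;> by_cases hn : x ∈ N <;> by_cases hr : x ∈ R <;> by_cases hs : x ∈ S <;>
    simp_all

abbrev CubeIndex (n : ℕ) : Type := ℤ × (Fin n → ℤ)

namespace CubeIndex

variable {n : ℕ}

def cube (p : CubeIndex n) : Set (En n) := dyadicCube n p.1 p.2

lemma mem_cube_iff_floor {p : CubeIndex n} {x : En n} :
    x ∈ p.cube ↔ ∀ i, ⌊x i / 2 ^ p.1⌋ = p.2 i := by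
  have h2 : (0 : ℝ) < 2 ^ p.1 := zpow_pos two_pos _
  refine forall_congr' fun i => ?_
  rw [Int.floor_eq_iff, le_div_iff₀ h2, div_lt_iff₀ h2]

lemma floor_div_two_zpow_of_le {k k' : ℤ} (hk : k ≤ k') (x : ℝ) :
    ⌊x / 2 ^ k'⌋ = ⌊x / 2 ^ k⌋ / 2 ^ (k' - k).toNat := by
  have hsplit : (2 : ℝ) ^ k' = 2 ^ k * ((2 ^ (k' - k).toNat : ℕ) : ℝ) := by
    rw [Nat.cast_pow, Nat.cast_ofNat, ← zpow_natCast, Int.toNat_of_nonneg (by omega),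
      ← zpow_add₀ two_ne_zero, add_sub_cancel]
  rw [hsplit, ← div_div, Int.floor_div_natCast]
  norm_cast

lemma cube_subset_of_le {p q : CubeIndex n} (hpq : p.1 ≤ q.1)
    (h : (p.cube ∩ q.cube).Nonempty) : p.cube ⊆ q.cube := by
  obtain ⟨x, hxp, hxq⟩ := h
  intro y hy
  rw [mem_cube_iff_floor] at hxp hxq hy ⊢
  intro i
  rw [floor_div_two_zpow_of_le hpq, hy, ← hxp, ← floor_div_two_zpow_of_le hpq, hxq]

lemma cube_subset_or_subset {p q : CubeIndex n} (h : (p.cube ∩ q.cube).Nonempty) :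
    p.cube ⊆ q.cube ∨ q.cube ⊆ p.cube := by
  rcases le_total p.1 q.1 with hpq | hqp
  · exact .inl (cube_subset_of_le hpq h)
  · exact .inr (cube_subset_of_le hqp (Set.inter_comm _ _ ▸ h))

def corner (p : CubeIndex n) : En n := WithLp.toLp 2 fun i => (p.2 i : ℝ) * 2 ^ p.1

lemma floor_corner_div (p : CubeIndex n) (i : Fin n) : ⌊p.corner i / 2 ^ p.1⌋ = p.2 i := by
  simp [corner, mul_div_cancel_right₀ _ (zpow_ne_zero p.1 (two_ne_zero (α := ℝ)))]

lemma corner_mem_cube (p : CubeIndex n) : p.corner ∈ p.cube :=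
  mem_cube_iff_floor.mpr p.floor_corner_div

lemma cube_nonempty (p : CubeIndex n) : p.cube.Nonempty := ⟨_, p.corner_mem_cube⟩

lemma volume_cube (p : CubeIndex n) :
    volume p.cube = ENNReal.ofReal (2 ^ p.1) ^ n := by
  have hpi : p.cube = (WithLp.ofLp : En n → Fin n → ℝ) ⁻¹'
      Set.univ.pi fun i => Ico ((p.2 i : ℝ) * 2 ^ p.1) ((p.2 i + 1) * 2 ^ p.1) := by
    ext x
    simp [cube, dyadicCube]
  rw [hpi, (PiLp.volume_preserving_ofLp (Fin n)).measure_preimage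
    (MeasurableSet.univ_pi fun _ => measurableSet_Ico).nullMeasurableSet, volume_pi_pi]
  simp [Real.volume_Ico, add_mul]

lemma scale_le_of_cube_subset (hn : n ≠ 0) {p q : CubeIndex n} (h : p.cube ⊆ q.cube) :
    p.1 ≤ q.1 := by
  have hvol := measure_mono (μ := volume) h
  rw [volume_cube, volume_cube, ENNReal.pow_le_pow_left_iff hn,
    ENNReal.ofReal_le_ofReal_iff (zpow_pos two_pos _).le] at hvol
  exact (zpow_le_zpow_iff_right₀ one_lt_two).mp hvol

lemma cube_injective (hn : n ≠ 0) : Function.Injective (cube (n := n)) := by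
  intro p q h
  have hk : p.1 = q.1 :=
    le_antisymm (scale_le_of_cube_subset hn h.le) (scale_le_of_cube_subset hn h.ge)
  have hcorner := mem_cube_iff_floor.mp (h ▸ p.corner_mem_cube)
  refine Prod.ext hk (funext fun i => ?_)
  rw [← hcorner i, ← hk, floor_corner_div]

lemma finite_supercubes (hn : n ≠ 0) (p : CubeIndex n) (K : ℤ) :
    {q : CubeIndex n | p.cube ⊆ q.cube ∧ q.1 ≤ K}.Finite := by
  refine Set.Finite.of_finite_image (f := Prod.fst) ((Set.finite_Icc p.1 K).subset ?_) ?_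
  · rintro _ ⟨q, hq, rfl⟩
    exact ⟨scale_le_of_cube_subset hn hq.1, hq.2⟩
  · intro q hq r hr hqr
    have hmeet : (q.cube ∩ r.cube).Nonempty :=
      p.cube_nonempty.mono (Set.subset_inter hq.1 hr.1)
    exact cube_injective hn ((cube_subset_of_le hqr.le hmeet).antisymm
      (cube_subset_of_le hqr.ge (Set.inter_comm _ _ ▸ hmeet)))

lemma exists_maximalFor_supercube (hn : n ≠ 0) {𝒜 : Set (CubeIndex n)} {K : ℤ}
    (hK : ∀ q ∈ 𝒜, q.1 ≤ K) {p : CubeIndex n} (hp : p ∈ 𝒜) :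
    ∃ q, MaximalFor (· ∈ 𝒜) cube q ∧ p.cube ⊆ q.cube := by
  obtain ⟨q, ⟨hq𝒜, hpq⟩, hmax⟩ := Set.Finite.exists_maximalFor cube
    {q | q ∈ 𝒜 ∧ p.cube ⊆ q.cube}
    ((finite_supercubes hn p K).subset fun q hq => ⟨hq.2, hK q hq.1⟩) ⟨p, hp, subset_rfl⟩
  exact ⟨q, ⟨hq𝒜, fun r hr hqr => hmax ⟨hr, hpq.trans hqr⟩ hqr⟩, hpq⟩

lemma iUnion_cube_subset_maximalFor (hn : n ≠ 0) {𝒜 : Set (CubeIndex n)} {K : ℤ}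
    (hK : ∀ q ∈ 𝒜, q.1 ≤ K) :
    ⋃ p ∈ 𝒜, p.cube ⊆ ⋃ q ∈ {q | MaximalFor (· ∈ 𝒜) cube q}, q.cube := by
  simp only [Set.iUnion_subset_iff]
  intro p hp x hx
  obtain ⟨q, hq, hpq⟩ := exists_maximalFor_supercube hn hK hp
  exact Set.mem_biUnion hq (hpq hx)

lemma disjoint_cube_of_maximalFor (hn : n ≠ 0) {𝒜 : Set (CubeIndex n)} {p q : CubeIndex n}
    (hp : MaximalFor (· ∈ 𝒜) cube p) (hq : MaximalFor (· ∈ 𝒜) cube q) (hpq : p ≠ q) :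
    Disjoint p.cube q.cube := by
  rw [Set.disjoint_iff_inter_eq_empty, ← Set.not_nonempty_iff_eq_empty]
  intro hmeet
  refine hpq (cube_injective hn ?_)
  rcases cube_subset_or_subset hmeet with h | h
  · exact h.antisymm (hp.2 hq.1 h)
  · exact (hq.2 hp.1 h).antisymm h

lemma exists_mem_cube_subset {U : Set (En n)} (hU : IsOpen U) {x : En n} (hx : x ∈ U) :
    ∃ p : CubeIndex n, x ∈ p.cube ∧ p.cube ⊆ U := by
  obtain ⟨r, hr, hball⟩ := Metric.isOpen_iff.mp
    (hU.preimage (PiLp.continuous_toLp 2 fun _ : Fin n => ℝ)) x.ofLp (by simpa using hx)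
  obtain ⟨j, hj⟩ := exists_pow_lt_of_lt_one hr one_half_lt_one
  set k : ℤ := -j
  have h2k : (2 : ℝ) ^ k = (1 / 2) ^ j := by simp [k, zpow_neg, zpow_natCast]
  refine ⟨(k, fun i => ⌊x i / 2 ^ k⌋), mem_cube_iff_floor.mpr fun _ => rfl, fun y hy => ?_⟩
  have hclose : dist y.ofLp x.ofLp < r := by
    refine (dist_pi_lt_iff hr).mpr fun i => ?_
    have h1 := Int.abs_sub_lt_one_of_floor_eq_floor (mem_cube_iff_floor.mp hy i)
    rw [← sub_div, abs_div, abs_of_pos (zpow_pos two_pos k : (0 : ℝ) < 2 ^ k),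
      div_lt_one (zpow_pos two_pos k)] at h1
    rw [Real.dist_eq]
    exact h1.trans (h2k ▸ hj)
  simpa using hball hclose

end CubeIndex

open CubeIndex

def dyadicWeight (δ : ℝ) (k : ℤ) : ℝ≥0∞ := ENNReal.ofReal (((2 : ℝ) ^ k) ^ δ)

lemma dyadicWeight_eq (δ : ℝ) (k : ℤ) : dyadicWeight δ k = ENNReal.ofReal ((2 ^ δ) ^ k) := by
  rw [dyadicWeight, ← Real.rpow_intCast, ← Real.rpow_intCast, ← Real.rpow_mul two_pos.le,
    ← Real.rpow_mul two_pos.le, mul_comm]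

lemma bddAbove_setOf_dyadicWeight_le {δ : ℝ} (hδ : 0 < δ) {B : ℝ≥0∞} (hB : B ≠ ⊤) :
    BddAbove {k | dyadicWeight δ k ≤ B} := by
  have h1 : 1 < (2 : ℝ) ^ δ := Real.one_lt_rpow one_lt_two hδ
  obtain ⟨m, hm⟩ := pow_unbounded_of_one_lt B.toReal h1
  refine ⟨m, fun k (hk : dyadicWeight δ k ≤ B) => not_lt.mp fun hmk => ?_⟩
  rw [dyadicWeight_eq, ENNReal.ofReal_le_iff_le_toReal hB] at hk
  have := zpow_lt_zpow_right₀ h1 hmk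
  rw [zpow_natCast] at this
  linarith

lemma tsum_dyadicWeight_neg_ne_top {δ : ℝ} (hδ : 0 < δ) :
    ∑' j : ℕ, dyadicWeight δ (-j) ≠ ⊤ := by
  have hr : ENNReal.ofReal ((2 ^ δ)⁻¹) < 1 := by
    rw [ENNReal.ofReal_lt_one]
    exact inv_lt_one_of_one_lt₀ (Real.one_lt_rpow one_lt_two hδ)
  simp_rw [dyadicWeight_eq, zpow_neg, zpow_natCast, ← inv_pow,
    ENNReal.ofReal_pow (inv_nonneg.mpr (Real.rpow_nonneg two_pos.le δ)), ENNReal.tsum_geometric]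
  exact ENNReal.inv_ne_top.mpr (tsub_pos_of_lt hr).ne'

variable {n : ℕ}

def coverCost (δ : ℝ) (c : ℕ → CubeIndex n) : ℝ≥0∞ := ∑' i, dyadicWeight δ (c i).1

lemma dyadicContent_eq_iInf (δ : ℝ) (E : Set (En n)) :
    dyadicContent n δ E = ⨅ (c : ℕ → CubeIndex n) (_ : E ⊆ interior (⋃ i, (c i).cube)),
      coverCost δ c := rfl

lemma dyadicContent_le_coverCost {δ : ℝ} {E : Set (En n)} (c : ℕ → CubeIndex n)
    (h : E ⊆ interior (⋃ i, (c i).cube)) : dyadicContent n δ E ≤ coverCost δ c :=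
  iInf₂_le c h

lemma dyadicContent_mono_s2 (δ : ℝ) : Monotone (dyadicContent n δ) :=
  fun _ _ hAB => le_iInf₂ fun c hc => iInf₂_le c (hAB.trans hc)

lemma exists_cover_of_dyadicContent_lt {δ : ℝ} {E : Set (En n)} {b : ℝ≥0∞}
    (h : dyadicContent n δ E < b) :
    ∃ c : ℕ → CubeIndex n, E ⊆ interior (⋃ i, (c i).cube) ∧ coverCost δ c < b := by
  simpa only [dyadicContent_eq_iInf, iInf_lt_iff, exists_prop] using h

lemma exists_isOpen_superset_dyadicContent_lt {δ : ℝ} {E : Set (En n)} {b : ℝ≥0∞}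
    (h : dyadicContent n δ E < b) :
    ∃ U, IsOpen U ∧ E ⊆ U ∧ dyadicContent n δ U < b := by
  obtain ⟨c, hEc, hcost⟩ := exists_cover_of_dyadicContent_lt h
  exact ⟨_, isOpen_interior, hEc, (dyadicContent_le_coverCost c subset_rfl).trans_lt hcost⟩

lemma le_dyadicContent_add_dyadicContent {δ : ℝ} {A B : Set (En n)} {a : ℝ≥0∞}
    (h : ∀ c d : ℕ → CubeIndex n, A ⊆ interior (⋃ i, (c i).cube) →
      B ⊆ interior (⋃ i, (d i).cube) → a ≤ coverCost δ c + coverCost δ d) :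
    a ≤ dyadicContent n δ A + dyadicContent n δ B := by
  simp only [dyadicContent_eq_iInf, ENNReal.iInf_add, ENNReal.add_iInf]
  exact le_iInf₂ fun d hd => le_iInf₂ fun c hc => h c d hc hd

lemma exists_injective_coverCost_lt {δ : ℝ} (hδ : 0 < δ) {ε : ℝ≥0∞} (hε : 0 < ε) :
    ∃ c : ℕ → CubeIndex n, Function.Injective c ∧ coverCost δ c < ε := by
  obtain ⟨M, hM⟩ := ((ENNReal.tendsto_sum_nat_add _ (tsum_dyadicWeight_neg_ne_top hδ)).eventually
    (gt_mem_nhds hε)).exists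
  refine ⟨fun j => (-((j + M : ℕ) : ℤ), 0), fun i j hij => ?_, hM⟩
  simp only [Prod.mk.injEq] at hij
  omega

lemma dyadicContent_le_tsum_s2 {δ : ℝ} (hδ : 0 < δ) {E : Set (En n)} (F : Set (CubeIndex n))
    (hE : E ⊆ interior (⋃ p ∈ F, p.cube)) :
    dyadicContent n δ E ≤ ∑' p : F, dyadicWeight δ (p : CubeIndex n).1 := by
  refine ENNReal.le_of_forall_pos_le_add fun ε hε _ => ?_
  -- padding with arbitrarily cheap cubes makes the family infinite, so it can be enumerated by `ℕ`
  obtain ⟨pad, hinj, hpad⟩ := exists_injective_coverCost_lt (n := n) hδ (ε := ε) (by positivity)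
  set F' := F ∪ Set.range pad
  have : Infinite F' :=
    ((Set.infinite_range_of_injective hinj).mono Set.subset_union_right).to_subtype
  obtain ⟨e⟩ := nonempty_equiv_of_countable (α := ℕ) (β := F')
  have hcov : ⋃ p ∈ F, p.cube ⊆ ⋃ i, (e i : CubeIndex n).cube := fun x hx => by
    obtain ⟨p, hp, hxp⟩ := Set.mem_iUnion₂.mp hx
    exact Set.mem_iUnion.mpr ⟨e.symm ⟨p, .inl hp⟩, by simpa using hxp⟩
  calc dyadicContent n δ E ≤ coverCost δ fun i => (e i : CubeIndex n) :=
        dyadicContent_le_coverCost _ (hE.trans (interior_mono hcov))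
    _ = ∑' p : F', dyadicWeight δ (p : CubeIndex n).1 :=
        e.tsum_eq fun p : F' => dyadicWeight δ (p : CubeIndex n).1
    _ ≤ ∑' p : F, dyadicWeight δ (p : CubeIndex n).1 + coverCost δ pad := by
        refine (ENNReal.tsum_union_le (fun q => dyadicWeight δ q.1) F (Set.range pad)).trans_eq ?_
        rw [tsum_range (fun q => dyadicWeight δ q.1) hinj]
        rfl
    _ ≤ _ := by gcongr

lemma inter_biUnion_cube_subset (hn : n ≠ 0) (R S : Set (CubeIndex n)) :
    (⋃ p ∈ R, p.cube) ∩ (⋃ q ∈ S, q.cube) ⊆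
      ⋃ q ∈ {q | q ∈ R ∪ S ∧ (¬ MaximalFor (· ∈ R ∪ S) cube q ∨ q ∈ R ∩ S)}, q.cube := by
  have hnot_max : ∀ p q, q ∈ R ∪ S → p.cube ⊆ q.cube →
      ¬ MaximalFor (· ∈ R ∪ S) cube p ∨ p = q := fun p q hq hpq =>
    or_iff_not_imp_left.mpr fun hp => cube_injective hn (hpq.antisymm ((not_not.mp hp).2 hq hpq))
  rintro y ⟨hyR, hyS⟩
  obtain ⟨p, hp, hyp⟩ := Set.mem_iUnion₂.mp hyR
  obtain ⟨q, hq, hyq⟩ := Set.mem_iUnion₂.mp hyS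
  rcases cube_subset_or_subset ⟨y, hyp, hyq⟩ with h | h
  · refine Set.mem_biUnion ⟨.inl hp, ?_⟩ hyp
    rcases hnot_max p q (.inr hq) h with h' | rfl
    exacts [.inl h', .inr ⟨hp, hq⟩]
  · refine Set.mem_biUnion ⟨.inr hq, ?_⟩ hyq
    rcases hnot_max q p (.inl hp) h with h' | rfl
    exacts [.inl h', .inr ⟨hp, hq⟩]

lemma dyadicWeight_le_coverCost (δ : ℝ) (c : ℕ → CubeIndex n) (i : ℕ) :
    dyadicWeight δ (c i).1 ≤ coverCost δ c :=
  ENNReal.le_tsum i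

lemma dyadicContent_union_add_inter_le_coverCost (hn : n ≠ 0) {δ : ℝ} (hδ : 0 < δ)
    {A B : Set (En n)} (c d : ℕ → CubeIndex n) (hA : A ⊆ interior (⋃ i, (c i).cube))
    (hB : B ⊆ interior (⋃ i, (d i).cube)) :
    dyadicContent n δ (A ∪ B) + dyadicContent n δ (A ∩ B) ≤ coverCost δ c + coverCost δ d := by
  rcases eq_or_ne (coverCost δ c + coverCost δ d) ⊤ with htop | hfin
  · exact htop ▸ le_top
  set R := Set.range c
  set S := Set.range d
  rw [← Set.biUnion_range] at hA hB
  obtain ⟨K, hK⟩ := bddAbove_setOf_dyadicWeight_le hδ hfin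
  have hKRS : ∀ q ∈ R ∪ S, q.1 ≤ K := by
    rintro _ (⟨i, rfl⟩ | ⟨i, rfl⟩)
    · exact hK ((dyadicWeight_le_coverCost δ c i).trans le_self_add)
    · exact hK ((dyadicWeight_le_coverCost δ d i).trans le_add_self)
  -- a cube lies in at most as many of `M`, `N` as of `R`, `S`, so `M` and `N` cost at most `c`, `d`
  set M := {q | MaximalFor (· ∈ R ∪ S) cube q}
  set N := {q | q ∈ R ∪ S ∧ (q ∉ M ∨ q ∈ R ∩ S)}
  have hM : A ∪ B ⊆ interior (⋃ q ∈ M, q.cube) := by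
    refine (Set.union_subset_union hA hB).trans (subset_interior_union.trans ?_)
    rw [← Set.biUnion_union]
    exact interior_mono (iUnion_cube_subset_maximalFor hn hKRS)
  have hN : A ∩ B ⊆ interior (⋃ q ∈ N, q.cube) := by
    refine (Set.inter_subset_inter hA hB).trans ?_
    rw [← interior_inter]
    exact interior_mono (inter_biUnion_cube_subset hn R S)
  set w : CubeIndex n → ℝ≥0∞ := fun q => dyadicWeight δ q.1
  calc dyadicContent n δ (A ∪ B) + dyadicContent n δ (A ∩ B)
      ≤ ∑' q : M, w q + ∑' q : N, w q :=
        add_le_add (dyadicContent_le_tsum_s2 hδ M hM) (dyadicContent_le_tsum_s2 hδ N hN)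
    _ ≤ ∑' q : R, w q + ∑' q : S, w q :=
        ENNReal.tsum_subtype_add_tsum_subtype_le w (fun q hq => hq.1) (fun q hq => hq.1)
          fun q ⟨hqM, hqN⟩ => hqN.2.resolve_left (not_not.mpr hqM)
    _ ≤ coverCost δ c + coverCost δ d :=
        add_le_add (ENNReal.tsum_range_le_tsum c w) (ENNReal.tsum_range_le_tsum d w)

lemma dyadicContent_union_add_inter_le (hn : n ≠ 0) {δ : ℝ} (hδ : 0 < δ) (A B : Set (En n)) :
    dyadicContent n δ (A ∪ B) + dyadicContent n δ (A ∩ B) ≤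
      dyadicContent n δ A + dyadicContent n δ B :=
  le_dyadicContent_add_dyadicContent fun c d hc hd =>
    dyadicContent_union_add_inter_le_coverCost hn hδ c d hc hd

def innerCost (δ : ℝ) (c : ℕ → CubeIndex n) (p : CubeIndex n) : ℝ≥0∞ :=
  ∑' i : {i | (c i).cube ⊆ p.cube}, dyadicWeight δ (c i).1

lemma innerCost_le_coverCost (δ : ℝ) (c : ℕ → CubeIndex n) (p : CubeIndex n) :
    innerCost δ c p ≤ coverCost δ c :=
  ENNReal.tsum_comp_le_tsum_of_injective Subtype.val_injective _

lemma tsum_innerCost_le_coverCost (δ : ℝ) {G : Set (CubeIndex n)} (hG : G.PairwiseDisjoint cube)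
    (c : ℕ → CubeIndex n) : ∑' p : G, innerCost δ c p ≤ coverCost δ c := by
  have hdisj : G.PairwiseDisjoint fun p => {i | (c i).cube ⊆ p.cube} :=
    fun p hp q hq hpq => Set.disjoint_left.mpr fun i hip hiq =>
      Set.disjoint_left.mp (hG hp hq hpq) (hip (c i).corner_mem_cube) (hiq (c i).corner_mem_cube)
  simp only [innerCost]
  rw [← ENNReal.tsum_biUnion' (f := fun i => dyadicWeight δ (c i).1) hdisj]
  exact ENNReal.tsum_comp_le_tsum_of_injective Subtype.val_injective _

lemma volume_cube_eq_dyadicWeight_mul (δ : ℝ) (p : CubeIndex n) :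
    volume p.cube = dyadicWeight δ p.1 * ENNReal.ofReal (((2 : ℝ) ^ p.1) ^ ((n : ℝ) - δ)) := by
  have h2 : (0 : ℝ) < 2 ^ p.1 := zpow_pos two_pos _
  rw [volume_cube, dyadicWeight, ← ENNReal.ofReal_pow h2.le,
    ← ENNReal.ofReal_mul (Real.rpow_nonneg h2.le δ), ← Real.rpow_add h2, add_sub_cancel,
    Real.rpow_natCast]

lemma dyadicWeight_le_innerCost (hn : n ≠ 0) {δ : ℝ} (hδn : δ ≤ n) {c : ℕ → CubeIndex n}
    {p : CubeIndex n} (hcov : p.cube ⊆ ⋃ i, (c i).cube) (hnot : ∀ i, ¬ p.cube ⊆ (c i).cube) :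
    dyadicWeight δ p.1 ≤ innerCost δ c p := by
  set D := ENNReal.ofReal (((2 : ℝ) ^ p.1) ^ ((n : ℝ) - δ))
  have hD : D ≠ 0 := (ENNReal.ofReal_pos.mpr (Real.rpow_pos_of_pos (zpow_pos two_pos _) _)).ne'
  have hsub : p.cube ⊆ ⋃ i ∈ {i | (c i).cube ⊆ p.cube}, (c i).cube := fun x hx => by
    obtain ⟨i, hxi⟩ := Set.mem_iUnion.mp (hcov hx)
    exact Set.mem_biUnion ((cube_subset_or_subset ⟨x, hxi, hx⟩).resolve_right (hnot i)) hxi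
  have hsmall : ∀ i : {i | (c i).cube ⊆ p.cube}, volume (c i).cube ≤ dyadicWeight δ (c i).1 * D :=
    fun i => by
      rw [volume_cube_eq_dyadicWeight_mul δ]
      refine mul_le_mul_right (ENNReal.ofReal_le_ofReal (Real.rpow_le_rpow (zpow_pos two_pos _).le
        (zpow_le_zpow_right₀ one_le_two (scale_le_of_cube_subset hn i.2)) (by linarith))) _
  refine (ENNReal.mul_le_mul_iff_left hD ENNReal.ofReal_ne_top).mp ?_
  calc dyadicWeight δ p.1 * D = volume p.cube := (volume_cube_eq_dyadicWeight_mul δ p).symm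
    _ ≤ ∑' i : {i | (c i).cube ⊆ p.cube}, volume (c i).cube :=
        (measure_mono hsub).trans (measure_biUnion_le _ (Set.to_countable _) _)
    _ ≤ innerCost δ c p * D := by
        rw [innerCost, ← ENNReal.tsum_mul_right]
        exact ENNReal.tsum_le_tsum hsmall

lemma exists_supercube_dyadicWeight_le_innerCost (hn : n ≠ 0) {δ : ℝ} (hδn : δ ≤ n)
    {c : ℕ → CubeIndex n} {p : CubeIndex n} (hcov : p.cube ⊆ ⋃ i, (c i).cube) :
    ∃ q, p.cube ⊆ q.cube ∧ dyadicWeight δ q.1 ≤ innerCost δ c q := by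
  by_cases h : ∃ i, p.cube ⊆ (c i).cube
  · obtain ⟨i, hi⟩ := h
    exact ⟨c i, hi, ENNReal.le_tsum (⟨i, subset_rfl (a := (c i).cube)⟩ :
      {j | (c j).cube ⊆ (c i).cube})⟩
  · exact ⟨p, subset_rfl, dyadicWeight_le_innerCost hn hδn hcov (not_exists.mp h)⟩

lemma exists_supercube_eventually_dyadicWeight_le_innerCost (hn : n ≠ 0) {δ : ℝ} (hδn : δ ≤ n)
    {ι : Type*} (𝒰 : Ultrafilter ι) (cov : ι → ℕ → CubeIndex n) {K : ℤ}
    (hK : ∀ t q, dyadicWeight δ q.1 ≤ innerCost δ (cov t) q → q.1 ≤ K) {p : CubeIndex n}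
    (hp : ∀ᶠ t in 𝒰, p.cube ⊆ ⋃ i, (cov t i).cube) :
    ∃ q, p.cube ⊆ q.cube ∧ ∀ᶠ t in 𝒰, dyadicWeight δ q.1 ≤ innerCost δ (cov t) q := by
  have hmem : (⋃ q ∈ {q | p.cube ⊆ q.cube ∧ q.1 ≤ K},
      {t | dyadicWeight δ q.1 ≤ innerCost δ (cov t) q}) ∈ 𝒰 := by
    refine Filter.mem_of_superset hp fun t ht => ?_
    obtain ⟨q, hpq, hq⟩ := exists_supercube_dyadicWeight_le_innerCost hn hδn ht
    exact Set.mem_biUnion ⟨hpq, hK t q hq⟩ hq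
  obtain ⟨q, hq, hq𝒰⟩ := (Ultrafilter.finite_biUnion_mem_iff (finite_supercubes hn p K)).mp hmem
  exact ⟨q, hq.1, hq𝒰⟩

lemma tsum_dyadicWeight_le_of_eventually {δ : ℝ} {ι : Type*} (𝒰 : Ultrafilter ι)
    (cov : ι → ℕ → CubeIndex n) {F : Set (CubeIndex n)} (hF : F.PairwiseDisjoint cube)
    (hFcov : ∀ q ∈ F, ∀ᶠ s in 𝒰, dyadicWeight δ q.1 ≤ innerCost δ (cov s) q) {b : ℝ≥0∞}
    (hb : ∀ s, coverCost δ (cov s) ≤ b) :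
    ∑' q : F, dyadicWeight δ (q : CubeIndex n).1 ≤ b := by
  rw [ENNReal.tsum_eq_iSup_sum]
  refine iSup_le fun t => ?_
  obtain ⟨s, hs⟩ := ((Filter.eventually_all_finset t).mpr fun q _ => hFcov q q.2).exists
  calc ∑ q ∈ t, dyadicWeight δ (q : CubeIndex n).1 ≤ ∑ q ∈ t, innerCost δ (cov s) q :=
        Finset.sum_le_sum hs
    _ ≤ ∑' q : F, innerCost δ (cov s) q := ENNReal.sum_le_tsum _
    _ ≤ b := (tsum_innerCost_le_coverCost δ hF _).trans (hb s)

lemma dyadicContent_le_of_forall_finset (hn : n ≠ 0) {δ : ℝ} (hδ : 0 < δ) (hδn : δ ≤ n)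
    {U : Set (En n)} (hU : IsOpen U) (P : Set (CubeIndex n)) (hUP : U ⊆ ⋃ p ∈ P, p.cube)
    {b : ℝ≥0∞} (hb : ∀ s : Finset P, dyadicContent n δ (⋃ p ∈ s, (p : CubeIndex n).cube) ≤ b) :
    dyadicContent n δ U ≤ b := by
  refine ENNReal.le_of_forall_pos_le_add fun ε hε hb_lt => ?_
  have hbε : b + ε ≠ ⊤ := (ENNReal.add_lt_top.mpr ⟨hb_lt, ENNReal.coe_lt_top⟩).ne
  have hb_lt_add : b < b + ε := ENNReal.lt_add_right hb_lt.ne (by exact_mod_cast hε.ne')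
  choose cov hcov hcost using fun s : Finset P =>
    exists_cover_of_dyadicContent_lt ((hb s).trans_lt hb_lt_add)
  obtain ⟨K, hK⟩ := bddAbove_setOf_dyadicWeight_le hδ hbε
  have hKcov : ∀ s q, dyadicWeight δ q.1 ≤ innerCost δ (cov s) q → q.1 ≤ K := fun s q hq =>
    hK (hq.trans ((innerCost_le_coverCost δ _ q).trans (hcost s).le))
  obtain ⟨𝒰, h𝒰⟩ := Filter.exists_ultrafilter_le (Filter.atTop : Filter (Finset P))
  set L := {q | ∀ᶠ s in 𝒰, dyadicWeight δ q.1 ≤ innerCost δ (cov s) q}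
  have hUL : U ⊆ ⋃ q ∈ L, q.cube := fun x hx => by
    obtain ⟨p, hp, hxp⟩ := Set.mem_iUnion₂.mp (hUP hx)
    have hp_cov : ∀ᶠ s in 𝒰, p.cube ⊆ ⋃ i, (cov s i).cube :=
      Filter.Eventually.mono (f := (𝒰 : Filter (Finset P)))
        (h𝒰 (Filter.eventually_ge_atTop {⟨p, hp⟩})) fun s hs =>
        (Set.subset_biUnion_of_mem (u := fun p : P => (p : CubeIndex n).cube)
          (Finset.singleton_subset_iff.mp hs)).trans ((hcov s).trans interior_subset)
    obtain ⟨q, hpq, hq⟩ :=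
      exists_supercube_eventually_dyadicWeight_le_innerCost hn hδn 𝒰 cov hKcov hp_cov
    exact Set.mem_biUnion hq (hpq hxp)
  have hLK : ∀ q ∈ L, q.1 ≤ K := fun q hq =>
    let ⟨s, hs⟩ := Filter.Eventually.exists (f := (𝒰 : Filter (Finset P))) hq
    hKcov s q hs
  set F := {q | MaximalFor (· ∈ L) cube q}
  have hUF : U ⊆ interior (⋃ q ∈ F, q.cube) :=
    interior_maximal (hUL.trans (iUnion_cube_subset_maximalFor hn hLK)) hU
  have hFdisj : F.PairwiseDisjoint cube := fun p hp q hq hpq =>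
    disjoint_cube_of_maximalFor hn hp hq hpq
  exact (dyadicContent_le_tsum_s2 hδ F hUF).trans
    (tsum_dyadicWeight_le_of_eventually 𝒰 cov hFdisj (fun q hq => hq.1) fun s => (hcost s).le)

lemma dyadicContent_iUnion_le_iSup_of_isOpen (hn : n ≠ 0) {δ : ℝ} (hδ : 0 < δ) (hδn : δ ≤ n)
    {W : ℕ → Set (En n)} (hW : ∀ N, IsOpen (W N)) (hmono : Monotone W) :
    dyadicContent n δ (⋃ N, W N) ≤ ⨆ N, dyadicContent n δ (W N) := by
  set P := {p : CubeIndex n | ∃ N, p.cube ⊆ W N}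
  have hcov : ⋃ N, W N ⊆ ⋃ p ∈ P, p.cube := fun x hx => by
    obtain ⟨N, hxN⟩ := Set.mem_iUnion.mp hx
    obtain ⟨p, hxp, hpW⟩ := exists_mem_cube_subset (hW N) hxN
    exact Set.mem_biUnion ⟨N, hpW⟩ hxp
  choose N hN using fun p : P => p.2
  refine dyadicContent_le_of_forall_finset hn hδ hδn (isOpen_iUnion hW) P hcov fun s => ?_
  have hsub : ⋃ p ∈ s, (p : CubeIndex n).cube ⊆ W (s.sup N) :=
    Set.iUnion₂_subset fun p hp => (hN p).trans (hmono (Finset.le_sup hp))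
  exact (dyadicContent_mono_s2 δ hsub).trans (le_iSup (fun N => dyadicContent n δ (W N)) _)

lemma dyadicContent_accumulate_le (hn : n ≠ 0) {δ : ℝ} (hδ : 0 < δ) {E U : ℕ → Set (En n)}
    (hE : Monotone E) (hEU : ∀ N, E N ⊆ U N) (hfin : ∀ N, dyadicContent n δ (E N) ≠ ⊤)
    {ε : ℕ → ℝ≥0∞} (hU : ∀ N, dyadicContent n δ (U N) ≤ dyadicContent n δ (E N) + ε N) (N : ℕ) :
    dyadicContent n δ (Set.accumulate U N) ≤
      dyadicContent n δ (E N) + ∑ k ∈ Finset.range (N + 1), ε k := by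
  induction N with
  | zero => simpa using hU 0
  | succ N ih =>
    have hE_inter : E N ⊆ Set.accumulate U N ∩ U (N + 1) :=
      Set.subset_inter ((hEU N).trans Set.subset_accumulate) ((hE N.le_succ).trans (hEU _))
    refine (ENNReal.add_le_add_iff_right (hfin N)).mp ?_
    calc dyadicContent n δ (Set.accumulate U (N + 1)) + dyadicContent n δ (E N)
        ≤ dyadicContent n δ (Set.accumulate U N ∪ U (N + 1)) +
            dyadicContent n δ (Set.accumulate U N ∩ U (N + 1)) := by
          rw [Set.accumulate_succ]
          gcongr
          exact dyadicContent_mono_s2 δ hE_inter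
      _ ≤ dyadicContent n δ (Set.accumulate U N) + dyadicContent n δ (U (N + 1)) :=
          dyadicContent_union_add_inter_le hn hδ _ _
      _ ≤ (dyadicContent n δ (E N) + ∑ k ∈ Finset.range (N + 1), ε k) +
            (dyadicContent n δ (E (N + 1)) + ε (N + 1)) := add_le_add ih (hU _)
      _ = (dyadicContent n δ (E (N + 1)) + ∑ k ∈ Finset.range (N + 2), ε k) +
            dyadicContent n δ (E N) := by
          rw [Finset.sum_range_succ _ (N + 1)]
          ring

lemma dyadicContent_iUnion_le_iSup (hn : n ≠ 0) {δ : ℝ} (hδ : 0 < δ) (hδn : δ ≤ n)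
    {E : ℕ → Set (En n)} (hE : Monotone E) :
    dyadicContent n δ (⋃ N, E N) ≤ ⨆ N, dyadicContent n δ (E N) := by
  refine ENNReal.le_of_forall_pos_le_add fun ε hε hlt => ?_
  have hfin : ∀ N, dyadicContent n δ (E N) ≠ ⊤ := fun N =>
    ((le_iSup (fun N => dyadicContent n δ (E N)) N).trans_lt hlt).ne
  obtain ⟨ε', hε'0, hε'⟩ := ENNReal.exists_pos_sum_of_countable' (ε := ε)
    (by exact_mod_cast hε.ne') ℕ
  choose U hUo hEU hU using fun N => exists_isOpen_superset_dyadicContent_lt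
    (ENNReal.lt_add_right (hfin N) (hε'0 N).ne')
  calc dyadicContent n δ (⋃ N, E N)
      ≤ dyadicContent n δ (⋃ N, Set.accumulate U N) :=
        dyadicContent_mono_s2 δ (Set.iUnion_mono fun N => (hEU N).trans Set.subset_accumulate)
    _ ≤ ⨆ N, dyadicContent n δ (Set.accumulate U N) :=
        dyadicContent_iUnion_le_iSup_of_isOpen hn hδ hδn
          (fun N => isOpen_biUnion fun k _ => hUo k) Set.monotone_accumulate
    _ ≤ (⨆ N, dyadicContent n δ (E N)) + ε := iSup_le fun N =>
        (dyadicContent_accumulate_le hn hδ hE hEU hfin (fun N => (hU N).le) N).trans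
          (add_le_add (le_iSup (fun N => dyadicContent n δ (E N)) N)
            ((ENNReal.sum_le_tsum _).trans hε'.le))

theorem lintegral_superlevel_liminf_le {α : Type*} (μ : Set α → ℝ≥0∞) (hμ : Monotone μ)
    (hμ_iUnion : ∀ E : ℕ → Set α, Monotone E → μ (⋃ N, E N) ≤ ⨆ N, μ (E N))
    (ν : Measure ℝ) (Ω : Set α) (f : ℕ → α → ℝ≥0∞) :
    ∫⁻ t, μ {x | x ∈ Ω ∧ ENNReal.ofReal t < liminf (fun i => f i x) atTop} ∂ν ≤
      liminf (fun i => ∫⁻ t, μ {x | x ∈ Ω ∧ ENNReal.ofReal t < f i x} ∂ν) atTop := by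
  have hlevel : ∀ t : ℝ, μ {x | x ∈ Ω ∧ ENNReal.ofReal t < liminf (fun i => f i x) atTop} ≤
      liminf (fun i => μ {x | x ∈ Ω ∧ ENNReal.ofReal t < f i x}) atTop := by
    intro t
    set T : ℕ → Set α := fun N => {x | x ∈ Ω ∧ ∀ i ≥ N, ENNReal.ofReal t < f i x}
    have hT : Monotone T := fun a b hab x hx => ⟨hx.1, fun i hi => hx.2 i (hab.trans hi)⟩
    have hsub : {x | x ∈ Ω ∧ ENNReal.ofReal t < liminf (fun i => f i x) atTop} ⊆ ⋃ N, T N := by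
      rintro x ⟨hxΩ, hxt⟩
      rw [liminf_eq_iSup_iInf_of_nat, lt_iSup_iff] at hxt
      obtain ⟨N, hN⟩ := hxt
      exact Set.mem_iUnion.mpr ⟨N, hxΩ, fun i hi => hN.trans_le (iInf₂_le i hi)⟩
    rw [liminf_eq_iSup_iInf_of_nat]
    exact (hμ hsub).trans <| (hμ_iUnion T hT).trans <| iSup_mono fun N =>
      le_iInf₂ fun i hi => hμ fun x hx => ⟨hx.1, hx.2 i hi⟩
  have hmeas : ∀ i, Measurable fun t : ℝ => μ {x | x ∈ Ω ∧ ENNReal.ofReal t < f i x} :=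
    fun i => Antitone.measurable fun t t' htt' => hμ fun x hx =>
      ⟨hx.1, (ENNReal.ofReal_le_ofReal htt').trans_lt hx.2⟩
  exact (lintegral_mono hlevel).trans (lintegral_liminf_le hmeas)

/-- Fatou's lemma for the Choquet integral with respect to the
dyadic Hausdorff content. -/
theorem choquet_fatou (n : ℕ) (hn : 1 ≤ n) (Ω : Set (En n))
    (δ : ℝ) (hδ0 : 0 < δ) (hδn : δ ≤ n) (f : ℕ → En n → ℝ≥0∞) :
    choquetIntegral n δ Ω (fun x => liminf (fun i => f i x) atTop) ≤
      liminf (fun i => choquetIntegral n δ Ω (f i)) atTop :=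
  lintegral_superlevel_liminf_le (dyadicContent n δ) (dyadicContent_mono_s2 δ)
    (fun _ hE => dyadicContent_iUnion_le_iSup (by omega) hδ0 hδn hE) _ Ω f
end
end
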